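/- Let (F_n) be a filtration on a probability space, X an (F_n)-adapted process with values in S = {1,…,N}, and for each n ≥ 1 let P_n be an F_{n-1}-measurable random stochastic matrix. If for every vector z ∈ ℝ^N the process M_n^z = z_{X_n} − z_{X_0} − ∑_{k=1}^{n} ((P_k − I) z)_{X_{k-1}} is an (F_n)-martingale, then X is a Markov chain with transition matrices (P_n) with respect to (F_n), i.e. for every n ≥ 1 and every state j, P(X_n = j | F_{n-1}) = P_n(X_{n-1}, j) almost surely. -/

import Mathlib

open MeasureTheory Finset

/-- A (real `N × N`) stochastic matrix: nonnegative entries, each row summing to 1. -/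
def IsStochasticMatrix {N : ℕ} (P : Matrix (Fin N) (Fin N) ℝ) : Prop :=
  (∀ i j, 0 ≤ P i j) ∧ ∀ i, ∑ j, P i j = 1

/-- The natural filtration `F n = σ(X 0, …, X n)` of a process `X`. -/
noncomputable def natFiltration {Ω : Type*} [m : MeasurableSpace Ω] {N : ℕ}
    (X : ℕ → Ω → Fin N) (hX : ∀ n, Measurable (X n)) : Filtration ℕ m where
  seq n := ⨆ k ∈ Set.Iic n, MeasurableSpace.comap (X k) inferInstance
  mono' := fun _ _ hab => biSup_mono fun _ hk => le_trans hk hab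
  le' := fun _ => iSup₂_le fun k _ => (hX k).comap_le

/-- Indicator (as a real-valued function) of the event `{X n = j}`. -/
def ind {Ω : Type*} {N : ℕ} (X : ℕ → Ω → Fin N) (n : ℕ) (j : Fin N) : Ω → ℝ :=
  fun ω => if X n ω = j then 1 else 0

/-- `X` is a Markov chain under `Q` with respect to the filtration `F`, with
(random, `F (n-1)`-measurable) transition matrices `P n`:
`Q(X n = j | F (n-1)) = P n (X (n-1)) j` a.s. for all `n ≥ 1` and all states `j`. -/
def IsMarkovChainWith {Ω : Type*} [m : MeasurableSpace Ω] {N : ℕ}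
    (Q : Measure Ω) (F : Filtration ℕ m) (X : ℕ → Ω → Fin N)
    (P : ℕ → Ω → Matrix (Fin N) (Fin N) ℝ) : Prop :=
  ∀ n, 1 ≤ n → ∀ j : Fin N,
    Q[ind X n j | F (n - 1)] =ᵐ[Q] fun ω => P n ω (X (n - 1) ω) j

/-- The likelihood-ratio process `Z n = ∏_{k=1}^n P k (X (k-1), X k) / P₀ (X (k-1), X k)`. -/
noncomputable def lr {Ω : Type*} {N : ℕ} (X : ℕ → Ω → Fin N)
    (P : ℕ → Ω → Matrix (Fin N) (Fin N) ℝ) (P₀ : Matrix (Fin N) (Fin N) ℝ)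
    (n : ℕ) (ω : Ω) : ℝ :=
  ∏ k ∈ Finset.Icc 1 n, P k ω (X (k - 1) ω) (X k ω) / P₀ (X (k - 1) ω) (X k ω)

/-! With `z = e_j` the martingale `M^z` has increment
`M_{n+1} - M_n = 1{X_{n+1} = j} - P_{n+1}(X_n, j)`. A martingale increment has zero conditional
expectation given `F_n`, and `P_{n+1}(X_n, j)` is `F_n`-measurable, so it is the conditional
expectation of `1{X_{n+1} = j}` given `F_n`. -/

namespace MeasureTheory

variable {Ω : Type*} {m : MeasurableSpace Ω} {F : Filtration ℕ m} {μ : Measure Ω}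
  {M : ℕ → Ω → ℝ}

theorem Martingale.condExp_succ_sub_ae_eq_zero (hM : Martingale M F μ) (n : ℕ) :
    μ[M (n + 1) - M n | F n] =ᵐ[μ] 0 := by
  filter_upwards [condExp_sub (hM.integrable (n + 1)) (hM.integrable n) (F n),
    hM.condExp_ae_eq n.le_succ, hM.condExp_ae_eq (le_refl n)] with ω hsub hsucc hself
  simp [hsub, hsucc, hself]

theorem Martingale.condExp_ae_eq_of_sub_eq_increment [SigmaFiniteFiltration μ F]
    (hM : Martingale M F μ) {n : ℕ}
    {Y g : Ω → ℝ} (hY : Integrable Y μ) (hg : StronglyMeasurable[F n] g)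
    (hYg : Y - g = M (n + 1) - M n) : μ[Y | F n] =ᵐ[μ] g := by
  have hΔ : Integrable (M (n + 1) - M n) μ := (hM.integrable _).sub (hM.integrable _)
  have hg_int : Integrable g μ := by simpa [← hYg] using hY.sub hΔ
  have hY_eq : Y = (M (n + 1) - M n) + g := by rw [← hYg, sub_add_cancel]
  filter_upwards [hY_eq ▸ condExp_add hΔ hg_int (F n), hM.condExp_succ_sub_ae_eq_zero n]
    with ω hadd hzero
  rw [hadd, Pi.add_apply, hzero, condExp_of_stronglyMeasurable (F.le n) hg hg_int, Pi.zero_apply,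
    zero_add]

end MeasureTheory

theorem Measurable.apply_of_countable {α ι β : Type*} {_ : MeasurableSpace α} [MeasurableSpace ι]
    [MeasurableSpace β] [Countable ι] [MeasurableSingletonClass ι] {f : ι → α → β}
    (hf : ∀ i, Measurable (f i)) {X : α → ι} (hX : Measurable X) :
    Measurable fun a => f (X a) a :=
  (measurable_from_prod_countable_left (f := fun p : α × ι => f p.2 p.1) hf).comp
    (measurable_id.prodMk hX)

section CompensatedProcess

variable {Ω : Type*} {N : ℕ}

def compensatedProcess (X : ℕ → Ω → Fin N) (Pn : ℕ → Ω → Matrix (Fin N) (Fin N) ℝ)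
    (z : Fin N → ℝ) (n : ℕ) (ω : Ω) : ℝ :=
  z (X n ω) - z (X 0 ω) -
    ∑ k ∈ Icc 1 n, ((∑ j, Pn k ω (X (k - 1) ω) j * z j) - z (X (k - 1) ω))

theorem compensatedProcess_succ_sub (X : ℕ → Ω → Fin N) (Pn : ℕ → Ω → Matrix (Fin N) (Fin N) ℝ)
    (z : Fin N → ℝ) (n : ℕ) :
    compensatedProcess X Pn z (n + 1) - compensatedProcess X Pn z n =
      fun ω => z (X (n + 1) ω) - ∑ j, Pn (n + 1) ω (X n ω) j * z j := by
  funext ω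
  simp only [compensatedProcess, Pi.sub_apply, sum_Icc_succ_top (Nat.le_add_left 1 n),
    Nat.add_sub_cancel]
  ring

theorem ind_sub_eq_compensatedProcess_succ_sub (X : ℕ → Ω → Fin N)
    (Pn : ℕ → Ω → Matrix (Fin N) (Fin N) ℝ) (n : ℕ) (j : Fin N) :
    ind X (n + 1) j - (fun ω => Pn (n + 1) ω (X n ω) j) =
      compensatedProcess X Pn (Pi.single j 1) (n + 1) -
        compensatedProcess X Pn (Pi.single j 1) n := by
  rw [compensatedProcess_succ_sub]
  funext ω
  simp [ind, Pi.single_apply]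

theorem integrable_ind {m : MeasurableSpace Ω} {μ : Measure Ω} [IsFiniteMeasure μ]
    {X : ℕ → Ω → Fin N} {n : ℕ} (hX : Measurable (X n)) (j : Fin N) :
    Integrable (ind X n j) μ := by
  have hind : ind X n j = {ω | X n ω = j}.indicator 1 := by
    funext ω
    simp [ind, Set.indicator_apply]
  rw [hind]
  exact (integrable_const 1).indicator (hX (measurableSet_singleton j))

end CompensatedProcess

theorem martingale_implies_markov_general
    {Ω : Type*} [m : MeasurableSpace Ω] {N : ℕ}
    (F : Filtration ℕ m) (P : Measure Ω) [IsProbabilityMeasure P]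
    (X : ℕ → Ω → Fin N) (hX_adapted : ∀ n, Measurable[F n] (X n))
    (Pn : ℕ → Ω → Matrix (Fin N) (Fin N) ℝ)
    (hPn_meas : ∀ n, 1 ≤ n → ∀ i j, Measurable[F (n - 1)] fun ω => Pn n ω i j)
    (hMart : ∀ z : Fin N → ℝ,
      Martingale
        (fun n ω => z (X n ω) - z (X 0 ω) -
          ∑ k ∈ Finset.Icc 1 n, ((∑ j, Pn k ω (X (k - 1) ω) j * z j) - z (X (k - 1) ω)))
        F P) :
    IsMarkovChainWith P F X Pn := by
  rintro _ hn j
  obtain ⟨n, rfl⟩ := Nat.exists_eq_add_of_le' hn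
  have hM : Martingale (compensatedProcess X Pn (Pi.single j 1)) F P := hMart _
  have hind : Integrable (ind X (n + 1) j) P :=
    integrable_ind ((hX_adapted (n + 1)).mono (F.le _) le_rfl) j
  have hPn : ∀ i, Measurable[F n] fun ω => Pn (n + 1) ω i j := fun i => hPn_meas (n + 1) hn i j
  have hg : Measurable[F n] fun ω => Pn (n + 1) ω (X n ω) j :=
    Measurable.apply_of_countable hPn (hX_adapted n)
  exact hM.condExp_ae_eq_of_sub_eq_increment hind hg.stronglyMeasurable
    (ind_sub_eq_compensatedProcess_succ_sub X Pn n j)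

/-- If `X` is adapted to a filtration `F`, the `Pn k` are
`F (k-1)`-measurable random stochastic matrices, and for every vector `z ∈ ℝ^N` the process
`M n = z (X n) - z (X 0) - ∑_{k=1}^n ((Pn k - I) z) (X (k-1))` is an `F`-martingale, then
`X` is a Markov chain with transition matrices `Pn` with respect to `F`:
`P(X n = j | F (n-1)) = Pn n (X (n-1), j)` a.s. for all `n ≥ 1` and all `j`. -/
theorem martingale_implies_markov
    {Ω : Type*} [m : MeasurableSpace Ω] {N : ℕ} (hN : 1 ≤ N)
    (F : Filtration ℕ m) (P : Measure Ω) [IsProbabilityMeasure P]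
    (X : ℕ → Ω → Fin N) (hX_adapted : ∀ n, Measurable[F n] (X n))
    (Pn : ℕ → Ω → Matrix (Fin N) (Fin N) ℝ)
    (hPn_meas : ∀ n, 1 ≤ n → ∀ i j, Measurable[F (n - 1)] fun ω => Pn n ω i j)
    (hPn_stoch : ∀ n, 1 ≤ n → ∀ ω, IsStochasticMatrix (Pn n ω))
    (hMart : ∀ z : Fin N → ℝ,
      Martingale
        (fun n ω => z (X n ω) - z (X 0 ω) -
          ∑ k ∈ Finset.Icc 1 n, ((∑ j, Pn k ω (X (k - 1) ω) j * z j) - z (X (k - 1) ω)))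
        F P) :
    IsMarkovChainWith P F X Pn :=
  martingale_implies_markov_general (m := m) F P X hX_adapted Pn hPn_meas hMart
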